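/- arXiv:2007.01822 — 2 statements merged into one kernel-verified Lean document; each statement's English description precedes it below -/
import Mathlib

section
/- Product inequality for weak limits of monotone functions: let P, G : [0,∞) → ℝ be continuous nondecreasing, ρ_n ∈ L¹(O;[0,∞)) with P(ρ_n) ⇀ P̄, G(ρ_n) ⇀ Ḡ, and P(ρ_n)G(ρ_n) ⇀ PG̅ weakly in L¹(O). Then P̄·Ḡ ≤ PG̅ almost everywhere in O. -/
open MeasureTheory Filter Set
open scoped ENNReal Topology

/-!
Monotonicity gives `(P(ρₙ) - P(b)) (G(ρₙ) - G(b)) ≥ 0` for every level `b ≥ 0`. Testing against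
indicators of sets of finite measure, this passes to the weak limits as
`P̄ Ḡ - PG̅ ≤ (P̄ - P(b)) (Ḡ - G(b))` a.e., simultaneously for all rational `b` and then, by
continuity, for all real `b ≥ 0`. The same limiting argument puts `P̄` between `P(0)` and `sup P`
(and `Ḡ` likewise). At a point `x`, either `P̄(x) = P(b)` or `Ḡ(x) = G(b)` for some `b` by the
intermediate value theorem, and the right-hand side vanishes; or `P̄(x)` and `Ḡ(x)` are the limits
of `P(n)` and `G(n)`, and the right-hand side tends to `0` along `b = n`.
-/

section SetIntegral

variable {α : Type*} [MeasurableSpace α] {μ : Measure α} {F H : ℕ → α → ℝ} {f h : α → ℝ}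

def TendstoSetIntegral (μ : Measure α) (F : ℕ → α → ℝ) (f : α → ℝ) : Prop :=
  ∀ s, MeasurableSet s → μ s < ∞ →
    Tendsto (fun n => ∫ x in s, F n x ∂μ) atTop (𝓝 (∫ x in s, f x ∂μ))

namespace TendstoSetIntegral

theorem of_tendsto_integral_mul
    (hweak : ∀ φ : α → ℝ, Measurable φ → (∃ C : ℝ, ∀ x, |φ x| ≤ C) →
      Tendsto (fun n => ∫ x, F n x * φ x ∂μ) atTop (𝓝 (∫ x, f x * φ x ∂μ))) :
    TendstoSetIntegral μ F f := by
  intro s hs _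
  have hind : ∀ u : α → ℝ, ∫ x, u x * s.indicator 1 x ∂μ = ∫ x in s, u x ∂μ := fun u => by
    rw [← integral_indicator hs]
    congr 1 with x
    by_cases hx : x ∈ s <;> simp [hx]
  have hbdd : ∀ x, |s.indicator (1 : α → ℝ) x| ≤ 1 := fun x => by
    by_cases hx : x ∈ s <;> simp [hx]
  simpa only [hind] using hweak _ (measurable_one.indicator hs) ⟨1, hbdd⟩

theorem const_mul (hF : TendstoSetIntegral μ F f) (c : ℝ) :
    TendstoSetIntegral μ (fun n x => c * F n x) (fun x => c * f x) := fun s hs hμs => by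
  simpa only [integral_const_mul] using (hF s hs hμs).const_mul c

theorem add (hF : TendstoSetIntegral μ F f) (hH : TendstoSetIntegral μ H h)
    (hFi : ∀ n, Integrable (F n) μ) (hfi : Integrable f μ)
    (hHi : ∀ n, Integrable (H n) μ) (hhi : Integrable h μ) :
    TendstoSetIntegral μ (fun n x => F n x + H n x) (fun x => f x + h x) := fun s hs hμs => by
  rw [integral_add hfi.integrableOn hhi.integrableOn]
  exact ((hF s hs hμs).add (hH s hs hμs)).congr fun n =>
    (integral_add (hFi n).integrableOn (hHi n).integrableOn).symm

theorem add_const (hF : TendstoSetIntegral μ F f)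
    (hFi : ∀ n, Integrable (F n) μ) (hfi : Integrable f μ) (c : ℝ) :
    TendstoSetIntegral μ (fun n x => F n x + c) (fun x => f x + c) := fun s hs hμs => by
  have hsplit : ∀ u : α → ℝ, Integrable u μ →
      ∫ x in s, (u x + c) ∂μ = (∫ x in s, u x ∂μ) + μ.real s • c := fun u hu => by
    rw [integral_add hu.integrableOn (integrableOn_const hμs.ne), setIntegral_const]
  rw [hsplit f hfi]
  exact ((hF s hs hμs).add_const _).congr fun n => (hsplit _ (hFi n)).symm

theorem ae_nonneg [SigmaFinite μ] (hF : TendstoSetIntegral μ F f)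
    (hfi : ∀ s, MeasurableSet s → μ s < ∞ → IntegrableOn f s μ)
    (hF0 : ∀ n, 0 ≤ᵐ[μ] F n) : 0 ≤ᵐ[μ] f :=
  ae_nonneg_of_forall_setIntegral_nonneg_of_sigmaFinite hfi fun s hs hμs =>
    ge_of_tendsto' (hF s hs hμs) fun n => integral_nonneg_of_ae (ae_restrict_of_ae (hF0 n))

theorem ae_const_le [SigmaFinite μ] (hF : TendstoSetIntegral μ F f)
    (hFi : ∀ n, Integrable (F n) μ) (hfi : Integrable f μ) {c : ℝ}
    (hc : ∀ n, ∀ᵐ x ∂μ, c ≤ F n x) : ∀ᵐ x ∂μ, c ≤ f x := by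
  filter_upwards [(hF.add_const hFi hfi (-c)).ae_nonneg
    (fun s _ hμs => hfi.integrableOn.add (integrableOn_const hμs.ne))
    fun n => (hc n).mono fun x hx => by simpa using hx] with x hx
  simpa using hx

theorem ae_le_const [SigmaFinite μ] (hF : TendstoSetIntegral μ F f)
    (hFi : ∀ n, Integrable (F n) μ) (hfi : Integrable f μ) {c : ℝ}
    (hc : ∀ n, ∀ᵐ x ∂μ, F n x ≤ c) : ∀ᵐ x ∂μ, f x ≤ c := by
  filter_upwards [(hF.const_mul (-1)).ae_const_le (c := -c) (fun n => (hFi n).const_mul _) (hfi.const_mul _)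
    fun n => (hc n).mono fun x hx => by simpa using hx] with x hx
  simpa using hx

theorem ae_mul_sub_le [SigmaFinite μ] {U V : ℕ → α → ℝ} {u v w : α → ℝ}
    (hU : TendstoSetIntegral μ U u) (hV : TendstoSetIntegral μ V v)
    (hUV : TendstoSetIntegral μ (fun n x => U n x * V n x) w)
    (hUi : ∀ n, Integrable (U n) μ) (hVi : ∀ n, Integrable (V n) μ)
    (hUVi : ∀ n, Integrable (fun x => U n x * V n x) μ)
    (hui : Integrable u μ) (hvi : Integrable v μ) (hwi : Integrable w μ) (a b : ℝ)
    (hnn : ∀ n, ∀ᵐ x ∂μ, 0 ≤ (U n x - a) * (V n x - b)) :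
    ∀ᵐ x ∂μ, u x * v x - w x ≤ (u x - a) * (v x - b) := by
  have hwu : Integrable (fun x => w x + -b * u x) μ := hwi.add (hui.const_mul _)
  have hlim := ((hUV.add (hU.const_mul (-b)) hUVi hwi (fun n => (hUi n).const_mul _)
    (hui.const_mul _)).add (hV.const_mul (-a)) (fun n => (hUVi n).add ((hUi n).const_mul _)) hwu
    (fun n => (hVi n).const_mul _) (hvi.const_mul _)).add_const
    (fun n => ((hUVi n).add ((hUi n).const_mul _)).add ((hVi n).const_mul _))
    (hwu.add (hvi.const_mul _)) (a * b)
  filter_upwards [hlim.ae_nonneg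
    (fun s _ hμs => (hwu.add (hvi.const_mul _)).integrableOn.add (integrableOn_const hμs.ne))
    fun n => (hnn n).mono fun x hx => by rw [Pi.zero_apply]; linear_combination hx] with x hx
  rw [Pi.zero_apply] at hx
  linear_combination hx

theorem ae_bounds_of_monotoneOn [SigmaFinite μ] {P : ℝ → ℝ} {ρ : ℕ → α → ℝ} {p : α → ℝ}
    (hP : TendstoSetIntegral μ (fun n x => P (ρ n x)) p) (hPm : MonotoneOn P (Ici 0))
    (hρ0 : ∀ n x, 0 ≤ ρ n x) (hPi : ∀ n, Integrable (fun x => P (ρ n x)) μ)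
    (hpi : Integrable p μ) :
    ∀ᵐ x ∂μ, P 0 ≤ p x ∧ (BddAbove (range fun n : ℕ => P n) → p x ≤ ⨆ n : ℕ, P n) := by
  refine (hP.ae_const_le hPi hpi fun n => .of_forall fun x =>
    hPm self_mem_Ici (hρ0 n x) (hρ0 n x)).and (eventually_imp_distrib_left.2 fun hbdd => ?_)
  refine hP.ae_le_const hPi hpi fun n => .of_forall fun x => ?_
  exact (hPm (hρ0 n x) (mem_Ici.2 (Nat.cast_nonneg _)) (Nat.le_ceil _)).trans (le_ciSup hbdd _)

end TendstoSetIntegral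

end SetIntegral

theorem le_of_forall_rat_of_continuousOn {f g : ℝ → ℝ} {a b : ℝ}
    (hf : ContinuousOn f (Ici a)) (hg : ContinuousOn g (Ici a))
    (h : ∀ q : ℚ, a ≤ q → f q ≤ g q) (hb : a ≤ b) : f b ≤ g b := by
  have hsub : Ioi b ∩ range ((↑) : ℚ → ℝ) ⊆ Ici a := fun y hy => hb.trans (le_of_lt hy.1)
  have hmem : b ∈ closure (Ioi b ∩ range ((↑) : ℚ → ℝ)) := by
    refine closure_minimal (Rat.denseRange_cast.open_subset_closure_inter isOpen_Ioi)
      isClosed_closure ?_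
    rw [closure_Ioi]
    exact self_mem_Ici
  refine ContinuousWithinAt.closure_le hmem ((hf b hb).mono hsub) ((hg b hb).mono hsub) ?_
  rintro _ ⟨hy, q, rfl⟩
  exact h q (hb.trans (le_of_lt hy))

theorem MonotoneOn.exists_eq_or_tendsto_natCast {P : ℝ → ℝ} (hPm : MonotoneOn P (Ici 0))
    (hPc : ContinuousOn P (Ici 0)) {p : ℝ} (hp0 : P 0 ≤ p)
    (hpsup : BddAbove (range fun n : ℕ => P n) → p ≤ ⨆ n : ℕ, P n) :
    (∃ b, 0 ≤ b ∧ P b = p) ∨ Tendsto (fun n : ℕ => P n) atTop (𝓝 p) := by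
  by_cases hreach : ∃ c, 0 ≤ c ∧ p ≤ P c
  · obtain ⟨c, hc, hpc⟩ := hreach
    obtain ⟨b, hb, hPb⟩ := intermediate_value_Icc hc (hPc.mono Icc_subset_Ici_self) ⟨hp0, hpc⟩
    exact Or.inl ⟨b, hb.1, hPb⟩
  push Not at hreach
  have hmono : Monotone fun n : ℕ => P n := fun m n hmn =>
    hPm (mem_Ici.2 m.cast_nonneg) (mem_Ici.2 n.cast_nonneg) (Nat.cast_le.2 hmn)
  have hbdd : BddAbove (range fun n : ℕ => P n) :=
    ⟨p, forall_mem_range.2 fun n => (hreach n n.cast_nonneg).le⟩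
  have hsup : ⨆ n : ℕ, P n = p :=
    le_antisymm (ciSup_le fun n => (hreach n n.cast_nonneg).le) (hpsup hbdd)
  exact Or.inr (hsup ▸ tendsto_atTop_ciSup hmono hbdd)

theorem mul_le_of_forall_rat_le_sub_mul_sub {P G : ℝ → ℝ}
    (hPc : ContinuousOn P (Ici 0)) (hGc : ContinuousOn G (Ici 0))
    (hPm : MonotoneOn P (Ici 0)) (hGm : MonotoneOn G (Ici 0)) {p g r : ℝ}
    (hp0 : P 0 ≤ p) (hpsup : BddAbove (range fun n : ℕ => P n) → p ≤ ⨆ n : ℕ, P n)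
    (hg0 : G 0 ≤ g) (hgsup : BddAbove (range fun n : ℕ => G n) → g ≤ ⨆ n : ℕ, G n)
    (h : ∀ q : ℚ, 0 ≤ (q : ℝ) → p * g - r ≤ (p - P q) * (g - G q)) : p * g ≤ r := by
  have hreal : ∀ b, 0 ≤ b → p * g - r ≤ (p - P b) * (g - G b) := fun b hb =>
    le_of_forall_rat_of_continuousOn (f := fun _ => p * g - r)
      (g := fun b => (p - P b) * (g - G b)) continuousOn_const
      ((continuousOn_const.sub hPc).mul (continuousOn_const.sub hGc)) h hb
  rcases hPm.exists_eq_or_tendsto_natCast hPc hp0 hpsup with ⟨b, hb, rfl⟩ | hPlim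
  · simpa using hreal b hb
  rcases hGm.exists_eq_or_tendsto_natCast hGc hg0 hgsup with ⟨b, hb, rfl⟩ | hGlim
  · simpa using hreal b hb
  have hprod : Tendsto (fun n : ℕ => (p - P n) * (g - G n)) atTop (𝓝 0) := by
    simpa using ((tendsto_const_nhds (x := p)).sub hPlim).mul
      ((tendsto_const_nhds (x := g)).sub hGlim)
  have := ge_of_tendsto' hprod fun n => hreal n n.cast_nonneg
  linarith

theorem stmt_16_general (d : ℕ) (O : Set (EuclideanSpace ℝ (Fin d)))
    (P G : ℝ → ℝ)
    (hPc : ContinuousOn P (Set.Ici 0)) (hGc : ContinuousOn G (Set.Ici 0))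
    (hPm : MonotoneOn P (Set.Ici 0)) (hGm : MonotoneOn G (Set.Ici 0))
    (ρ : ℕ → EuclideanSpace ℝ (Fin d) → ℝ)
    (hρ0 : ∀ n x, 0 ≤ ρ n x)
    (hPint : ∀ n, IntegrableOn (fun x => P (ρ n x)) O)
    (hGint : ∀ n, IntegrableOn (fun x => G (ρ n x)) O)
    (hPGint : ∀ n, IntegrableOn (fun x => P (ρ n x) * G (ρ n x)) O)
    (Pbar Gbar PGbar : EuclideanSpace ℝ (Fin d) → ℝ)
    (hPbar : IntegrableOn Pbar O) (hGbar : IntegrableOn Gbar O)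
    (hPGbar : IntegrableOn PGbar O)
    (hweakP : ∀ φ : EuclideanSpace ℝ (Fin d) → ℝ,
      Measurable φ → (∃ C : ℝ, ∀ x, |φ x| ≤ C) →
      Tendsto (fun n => ∫ x in O, P (ρ n x) * φ x) atTop (𝓝 (∫ x in O, Pbar x * φ x)))
    (hweakG : ∀ φ : EuclideanSpace ℝ (Fin d) → ℝ,
      Measurable φ → (∃ C : ℝ, ∀ x, |φ x| ≤ C) →
      Tendsto (fun n => ∫ x in O, G (ρ n x) * φ x) atTop (𝓝 (∫ x in O, Gbar x * φ x)))
    (hweakPG : ∀ φ : EuclideanSpace ℝ (Fin d) → ℝ,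
      Measurable φ → (∃ C : ℝ, ∀ x, |φ x| ≤ C) →
      Tendsto (fun n => ∫ x in O, P (ρ n x) * G (ρ n x) * φ x) atTop
        (𝓝 (∫ x in O, PGbar x * φ x))) :
    ∀ᵐ x ∂(volume.restrict O), Pbar x * Gbar x ≤ PGbar x := by
  have hP := TendstoSetIntegral.of_tendsto_integral_mul (F := fun n x => P (ρ n x)) hweakP
  have hG := TendstoSetIntegral.of_tendsto_integral_mul (F := fun n x => G (ρ n x)) hweakG
  have hPG := TendstoSetIntegral.of_tendsto_integral_mul
    (F := fun n x => P (ρ n x) * G (ρ n x)) hweakPG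
  have hprod : ∀ᵐ x ∂(volume.restrict O), ∀ q : ℚ, 0 ≤ (q : ℝ) →
      Pbar x * Gbar x - PGbar x ≤ (Pbar x - P q) * (Gbar x - G q) :=
    ae_all_iff.2 fun q => eventually_imp_distrib_left.2 fun hq =>
      hP.ae_mul_sub_le hG hPG hPint hGint hPGint hPbar hGbar hPGbar _ _ fun n =>
        .of_forall fun x => (hPm.monovaryOn hGm).sub_mul_sub_nonneg hq (hρ0 n x)
  filter_upwards [hP.ae_bounds_of_monotoneOn hPm hρ0 hPint hPbar,
    hG.ae_bounds_of_monotoneOn hGm hρ0 hGint hGbar, hprod] with x ⟨hp0, hpsup⟩ ⟨hg0, hgsup⟩ hx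
  exact mul_le_of_forall_rat_le_sub_mul_sub hPc hGc hPm hGm hp0 hpsup hg0 hgsup hx

/-- Product inequality for weak limits of monotone functions: let
`P, G : [0,∞) → ℝ` be continuous nondecreasing, `ρ_n ∈ L¹(O;[0,∞))` with
`P(ρ_n) ⇀ P̄`, `G(ρ_n) ⇀ Ḡ` and `P(ρ_n)G(ρ_n) ⇀ PG̅` weakly in `L¹(O)`.
Then `P̄·Ḡ ≤ PG̅` a.e. in `O`. -/
theorem stmt_16 (d : ℕ) (O : Set (EuclideanSpace ℝ (Fin d)))
    (hOopen : IsOpen O) (hOne : O.Nonempty)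
    (P G : ℝ → ℝ)
    (hPc : ContinuousOn P (Set.Ici 0)) (hGc : ContinuousOn G (Set.Ici 0))
    (hPm : MonotoneOn P (Set.Ici 0)) (hGm : MonotoneOn G (Set.Ici 0))
    (ρ : ℕ → EuclideanSpace ℝ (Fin d) → ℝ)
    (hρ0 : ∀ n x, 0 ≤ ρ n x) (hρint : ∀ n, IntegrableOn (ρ n) O)
    (hPint : ∀ n, IntegrableOn (fun x => P (ρ n x)) O)
    (hGint : ∀ n, IntegrableOn (fun x => G (ρ n x)) O)
    (hPGint : ∀ n, IntegrableOn (fun x => P (ρ n x) * G (ρ n x)) O)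
    (Pbar Gbar PGbar : EuclideanSpace ℝ (Fin d) → ℝ)
    (hPbar : IntegrableOn Pbar O) (hGbar : IntegrableOn Gbar O)
    (hPGbar : IntegrableOn PGbar O)
    (hweakP : ∀ φ : EuclideanSpace ℝ (Fin d) → ℝ,
      Measurable φ → (∃ C : ℝ, ∀ x, |φ x| ≤ C) →
      Tendsto (fun n => ∫ x in O, P (ρ n x) * φ x) atTop (𝓝 (∫ x in O, Pbar x * φ x)))
    (hweakG : ∀ φ : EuclideanSpace ℝ (Fin d) → ℝ,
      Measurable φ → (∃ C : ℝ, ∀ x, |φ x| ≤ C) →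
      Tendsto (fun n => ∫ x in O, G (ρ n x) * φ x) atTop (𝓝 (∫ x in O, Gbar x * φ x)))
    (hweakPG : ∀ φ : EuclideanSpace ℝ (Fin d) → ℝ,
      Measurable φ → (∃ C : ℝ, ∀ x, |φ x| ≤ C) →
      Tendsto (fun n => ∫ x in O, P (ρ n x) * G (ρ n x) * φ x) atTop
        (𝓝 (∫ x in O, PGbar x * φ x))) :
    ∀ᵐ x ∂(volume.restrict O), Pbar x * Gbar x ≤ PGbar x :=
  stmt_16_general d O P G hPc hGc hPm hGm ρ hρ0 hPint hGint hPGint Pbar Gbar PGbar hPbar hGbar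
    hPGbar hweakP hweakG hweakPG
end

section
/- Stationarity of the extended boundary density along the flow: let X be the flow of −u_B and define r_B along trajectories by r_B(X(s,x_B)) = r_B(x_B) exp(∫₀^s div u_B(X(z;x_B)) dz). Then the extended field satisfies div(r_B u_B) = 0 on the region swept by the trajectories {X(s,x_B) : s ∈ (0,δ), x_B ∈ Γ}, where this parametrization is a diffeomorphism. -/
open scoped Topology

/-!
Differentiating the defining formula for `r_B` along a trajectory of `-u_B` gives
`∇r_B · u_B = -r_B div u_B` at every point of the swept region, and the product rule
`div (r_B u_B) = r_B div u_B + ∇r_B · u_B` then vanishes there.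
-/

section Divergence

variable {ι : Type*} [Fintype ι] [DecidableEq ι]

noncomputable def divergence (u : (ι → ℝ) → ι → ℝ) (x : ι → ℝ) : ℝ :=
  ∑ i, fderiv ℝ u x (Pi.single i 1) i

theorem ContDiff.continuous_divergence {u : (ι → ℝ) → ι → ℝ} (hu : ContDiff ℝ 1 u) :
    Continuous (divergence u) :=
  continuous_finsetSum _ fun i _ =>
    (continuous_apply i).comp ((hu.continuous_fderiv one_ne_zero).clm_apply continuous_const)

theorem ContinuousLinearMap.apply_eq_sum_apply_single (L : (ι → ℝ) →L[ℝ] ℝ) (v : ι → ℝ) :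
    L v = ∑ i, v i * L (Pi.single i 1) := by
  conv_lhs => rw [pi_eq_sum_univ' v]
  simp only [map_sum, map_smul, smul_eq_mul]

theorem sum_fderiv_mul_apply_single {f : (ι → ℝ) → ℝ} {u : (ι → ℝ) → ι → ℝ} {x : ι → ℝ}
    (hf : DifferentiableAt ℝ f x) (hu : DifferentiableAt ℝ u x) :
    ∑ i, fderiv ℝ (fun y => f y * u y i) x (Pi.single i 1)
      = f x * divergence u x + fderiv ℝ f x (u x) := by
  have hterm : ∀ i, fderiv ℝ (fun y => f y * u y i) x (Pi.single i 1)
      = f x * fderiv ℝ u x (Pi.single i 1) i + u x i * fderiv ℝ f x (Pi.single i 1) := fun i => by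
    rw [fderiv_fun_mul hf (differentiableAt_pi.1 hu i), fderiv_apply hu i]
    rfl
  rw [Finset.sum_congr rfl fun i _ => hterm i, Finset.sum_add_distrib, ← Finset.mul_sum,
    ← ContinuousLinearMap.apply_eq_sum_apply_single]
  rfl

end Divergence

theorem hasDerivAt_mul_exp_integral {φ : ℝ → ℝ} (hφ : Continuous φ) (c s : ℝ) :
    HasDerivAt (fun t => c * Real.exp (∫ z in (0:ℝ)..t, φ z))
      (c * Real.exp (∫ z in (0:ℝ)..s, φ z) * φ s) s := by
  simpa only [mul_assoc] using
    ((hφ.integral_hasStrictDerivAt 0 s).hasDerivAt.exp).const_mul c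

theorem fderiv_apply_neg_eq_of_eventuallyEq_mul_exp_integral {E : Type*}
    [NormedAddCommGroup E] [NormedSpace ℝ E] {r : E → ℝ} {γ : ℝ → E} {v : E} {φ : ℝ → ℝ}
    {c s : ℝ} (hγ : HasDerivAt γ (-v) s) (hr : DifferentiableAt ℝ r (γ s)) (hφ : Continuous φ)
    (hrγ : (fun t => r (γ t)) =ᶠ[𝓝 s] fun t => c * Real.exp (∫ z in (0:ℝ)..t, φ z)) :
    fderiv ℝ r (γ s) v = -(r (γ s) * φ s) := by
  have hchain : HasDerivAt (fun t => r (γ t)) (fderiv ℝ r (γ s) (-v)) s :=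
    hr.hasFDerivAt.comp_hasDerivAt s hγ
  have hformula := (hasDerivAt_mul_exp_integral hφ c s).congr_of_eventuallyEq hrγ
  rw [← hrγ.eq_of_nhds] at hformula
  rw [← neg_neg (fderiv ℝ r (γ s) v), ← map_neg, hchain.unique hformula]

theorem stmt_18_general (uB : (Fin 3 → ℝ) → (Fin 3 → ℝ)) (huB : ContDiff ℝ 2 uB)
    (X : ℝ → (Fin 3 → ℝ) → (Fin 3 → ℝ))
    (hXode : ∀ s x, HasDerivAt (fun t => X t x) (-uB (X s x)) s)
    (G : (Fin 2 → ℝ) →ᵃ[ℝ] (Fin 3 → ℝ)) (O : Set (Fin 2 → ℝ)) (δ : ℝ)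
    (rB : (Fin 3 → ℝ) → ℝ)
    (hrB : ∀ s ∈ Set.Ioo (0:ℝ) δ, ∀ ζ ∈ O,
      rB (X s (G ζ)) = rB (G ζ) * Real.exp (∫ z in (0:ℝ)..s,
        ∑ i, fderiv ℝ uB (X z (G ζ)) (Pi.single i 1) i))
    (V : Set (Fin 3 → ℝ))
    (hV : V = (fun p : ℝ × (Fin 2 → ℝ) => X p.1 (G p.2)) '' (Set.Ioo (0:ℝ) δ ×ˢ O))
    (hrBdiff : ∀ x ∈ V, DifferentiableAt ℝ rB x) :
    ∀ x ∈ V, ∑ i, fderiv ℝ (fun y => rB y * uB y i) x (Pi.single i 1) = 0 := by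
  intro x hx
  obtain ⟨⟨s, ζ⟩, ⟨hs, hζ⟩, rfl⟩ := hV ▸ hx
  have hC1 : ContDiff ℝ 1 uB := huB.of_le (by norm_num)
  have hcurve : Continuous fun t => X t (G ζ) :=
    continuous_iff_continuousAt.2 fun t => (hXode t (G ζ)).continuousAt
  have hrB_along : (fun t => rB (X t (G ζ))) =ᶠ[𝓝 s]
      fun t => rB (G ζ) * Real.exp (∫ z in (0:ℝ)..t, divergence uB (X z (G ζ))) := by
    filter_upwards [isOpen_Ioo.mem_nhds hs] with t ht using hrB t ht ζ hζ
  have hflow := fderiv_apply_neg_eq_of_eventuallyEq_mul_exp_integral (hXode s (G ζ))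
    (hrBdiff _ hx) (hC1.continuous_divergence.comp hcurve) hrB_along
  rw [sum_fderiv_mul_apply_single (hrBdiff _ hx) (hC1.differentiable one_ne_zero _), hflow]
  simp only [Function.comp_apply]
  ring

/-- Stationarity of the extended boundary density along the flow: let `X` be the
flow of `−u_B` and define `r_B` along trajectories emanating from a flat inflow
boundary piece `Γ = G(O)` (with `u_B·n < 0` on `Γ`) by
`r_B(X(s,x_B)) = r_B(x_B) exp(∫₀^s div u_B(X(z;x_B)) dz)`.  Then the extended field
satisfies `div(r_B u_B) = 0` on the region `V` swept by the trajectories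
`{X(s, G(ζ)) : s ∈ (0,δ), ζ ∈ O}`, this parametrization being a diffeomorphism
(injective, with open image, and the extended density differentiable there). -/
theorem stmt_18 (uB : (Fin 3 → ℝ) → (Fin 3 → ℝ)) (huB : ContDiff ℝ 2 uB)
    (X : ℝ → (Fin 3 → ℝ) → (Fin 3 → ℝ))
    (hX0 : ∀ x, X 0 x = x)
    (hXode : ∀ s x, HasDerivAt (fun t => X t x) (-uB (X s x)) s)
    (G : (Fin 2 → ℝ) →ᵃ[ℝ] (Fin 3 → ℝ)) (O : Set (Fin 2 → ℝ)) (δ : ℝ) (hδ : 0 < δ)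
    (n : Fin 3 → ℝ)
    (hGn : ∀ w : Fin 2 → ℝ, ∑ i, G.linear w i * n i = 0)
    (hin : ∀ ζ ∈ O, ∑ i, uB (G ζ) i * n i < 0)
    (rB : (Fin 3 → ℝ) → ℝ)
    (hrBC1 : ContDiffOn ℝ 1 rB (Set.range G))
    (hrB : ∀ s ∈ Set.Ioo (0:ℝ) δ, ∀ ζ ∈ O,
      rB (X s (G ζ)) = rB (G ζ) * Real.exp (∫ z in (0:ℝ)..s,
        ∑ i, fderiv ℝ uB (X z (G ζ)) (Pi.single i 1) i))
    (V : Set (Fin 3 → ℝ))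
    (hV : V = (fun p : ℝ × (Fin 2 → ℝ) => X p.1 (G p.2)) '' (Set.Ioo (0:ℝ) δ ×ˢ O))
    (hinj : Set.InjOn (fun p : ℝ × (Fin 2 → ℝ) => X p.1 (G p.2)) (Set.Ioo (0:ℝ) δ ×ˢ O))
    (hVopen : IsOpen V)
    (hrBdiff : ∀ x ∈ V, DifferentiableAt ℝ rB x) :
    ∀ x ∈ V, ∑ i, fderiv ℝ (fun y => rB y * uB y i) x (Pi.single i 1) = 0 :=
  stmt_18_general uB huB X hXode G O δ rB hrB V hV hrBdiff
end
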